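/- For every real t with 0 ≤ t ≤ 1, (π/8) · ∑_{n=1}^∞ t^{2n}/n³ = ∫₀¹ ((arcsin(t·x))² · arccos x)/x dx, where the integral is taken over the real interval [0,1]. -/

import Mathlib

/-!
Write `c m = (2m)‼ / (2m+1)‼`. The function `arcsin y / √(1 - y²)` and the series
`∑ c m y^(2m+1)` both solve `(1 - y²) f' - y f = 1` with `f 0 = 0` (for the series this is a
telescoping identity, since `(2m+3) c (m+1) = (2m+2) c m`), so they agree on `(-1, 1)`;
integrating, `arcsin y ^ 2 = ∑ c m / (m+1) · y^(2m+2)`.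

Multiplying by `arccos x / x` and integrating term by term (all terms are nonnegative) leaves
the moments `∫₀¹ x^(2m+1) arccos x`. The substitution `x = sin θ` and an integration by parts turn them into
`(∫₀^{π/2} sin^(2m+2)) / (2m+2)`, and the Wallis recursion gives
`c m · ∫₀^{π/2} sin^(2m+2) = π / (4(m+1))`, so the `m`-th term is `π t^(2m+2) / (8(m+1)³)`.
-/

open Real Set
open scoped Nat

open MeasureTheory in
lemma intervalIntegral_tsum_of_nonneg {ι : Type*} [Countable ι] {f : ι → ℝ → ℝ} {a b : ℝ}
    (hab : a ≤ b) (hf : ∀ i, IntervalIntegrable (f i) volume a b)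
    (hf_nonneg : ∀ i, ∀ x ∈ Ioc a b, 0 ≤ f i x) (hsum : Summable fun i => ∫ x in a..b, f i x) :
    ∫ x in a..b, ∑' i, f i x = ∑' i, ∫ x in a..b, f i x := by
  simp only [intervalIntegral.integral_of_le hab] at hsum ⊢
  have hnorm : ∀ i, ∫ x in Ioc a b, ‖f i x‖ = ∫ x in Ioc a b, f i x := fun i =>
    setIntegral_congr_fun measurableSet_Ioc fun x hx => Real.norm_of_nonneg (hf_nonneg i x hx)
  exact (integral_tsum_of_summable_integral_norm (fun i => (hf i).1)
    (by simpa only [hnorm] using hsum)).symm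

lemma summable_two_mul_add_one_mul_pow {r : ℝ} (hr : |r| < 1) :
    Summable (fun m : ℕ => (2 * m + 1 : ℝ) * r ^ (2 * m)) := by
  have hr2 : ‖r ^ 2‖ < 1 := by
    rw [norm_pow, Real.norm_eq_abs]; exact pow_lt_one₀ (abs_nonneg r) hr two_ne_zero
  have := ((summable_pow_mul_geometric_of_norm_lt_one 1 hr2).mul_left 2).add
    (summable_geometric_of_norm_lt_one hr2)
  refine this.congr fun m => ?_
  rw [pow_mul]
  ring

noncomputable def arcsinCoeff (m : ℕ) : ℝ := ((2 * m)‼ : ℝ) / (2 * m + 1)‼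

lemma arcsinCoeff_zero : arcsinCoeff 0 = 1 := by simp [arcsinCoeff]

lemma arcsinCoeff_succ (m : ℕ) :
    arcsinCoeff (m + 1) = arcsinCoeff m * (2 * m + 2) / (2 * m + 3) := by
  rw [arcsinCoeff, arcsinCoeff, show 2 * (m + 1) = 2 * m + 2 by ring,
    show 2 * m + 2 + 1 = (2 * m + 1) + 2 by ring, Nat.doubleFactorial_add_two,
    Nat.doubleFactorial_add_two]
  push_cast
  field_simp
  ring

lemma arcsinCoeff_pos (m : ℕ) : 0 < arcsinCoeff m := by
  unfold arcsinCoeff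
  have := Nat.doubleFactorial_pos
  positivity

lemma arcsinCoeff_le_one (m : ℕ) : arcsinCoeff m ≤ 1 := by
  induction m with
  | zero => simp [arcsinCoeff_zero]
  | succ m ih =>
    rw [arcsinCoeff_succ, div_le_one (by positivity)]
    nlinarith [arcsinCoeff_pos m]

lemma summable_arcsinCoeff_mul_pow {y : ℝ} (hy : |y| < 1) (k : ℕ) :
    Summable (fun m : ℕ => arcsinCoeff m * y ^ (2 * m + k)) := by
  refine (summable_two_mul_add_one_mul_pow (r := |y|) (by rwa [abs_abs])).of_norm_bounded
    fun m => ?_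
  have hyk : |y| ^ k ≤ 1 := pow_le_one₀ (abs_nonneg y) hy.le
  rw [norm_mul, norm_pow, Real.norm_eq_abs, Real.norm_eq_abs, abs_of_pos (arcsinCoeff_pos m),
    pow_add]
  calc arcsinCoeff m * (|y| ^ (2 * m) * |y| ^ k) ≤ 1 * (|y| ^ (2 * m) * 1) := by
        gcongr
        exact arcsinCoeff_le_one m
    _ ≤ (2 * m + 1) * |y| ^ (2 * m) := by nlinarith [pow_nonneg (abs_nonneg y) (2 * m)]

lemma norm_arcsinCoeff_mul_le {y r : ℝ} (hyr : |y| ≤ r) (m : ℕ) :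
    ‖arcsinCoeff m * ((2 * m + 1) * y ^ (2 * m))‖ ≤ (2 * m + 1) * r ^ (2 * m) := by
  rw [norm_mul, norm_mul, norm_pow, Real.norm_eq_abs, Real.norm_eq_abs, Real.norm_eq_abs,
    abs_of_pos (arcsinCoeff_pos m), abs_of_pos (by positivity : (0 : ℝ) < 2 * m + 1)]
  calc arcsinCoeff m * ((2 * m + 1) * |y| ^ (2 * m)) ≤ 1 * ((2 * m + 1) * r ^ (2 * m)) := by
        gcongr
        exact arcsinCoeff_le_one m
    _ = _ := one_mul _

lemma one_sub_sq_mul_tsum_sub_mul_tsum {y : ℝ} (hy : |y| < 1) :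
    (1 - y ^ 2) * ∑' m : ℕ, arcsinCoeff m * ((2 * m + 1) * y ^ (2 * m))
      - y * ∑' m : ℕ, arcsinCoeff m * y ^ (2 * m + 1) = 1 := by
  set g : ℕ → ℝ := fun m => arcsinCoeff m * ((2 * m + 1) * y ^ (2 * m))
  have hg : Summable g :=
    (summable_two_mul_add_one_mul_pow (r := |y|) (by rwa [abs_abs])).of_norm_bounded
      (norm_arcsinCoeff_mul_le le_rfl)
  have htel : ∀ m : ℕ, (1 - y ^ 2) * g m - y * (arcsinCoeff m * y ^ (2 * m + 1))
      = g m - g (m + 1) := fun m => by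
    simp only [g, arcsinCoeff_succ]
    push_cast
    field_simp
    ring
  calc _ = ∑' m, (g m - g (m + 1)) := by
        rw [← tsum_mul_left, ← tsum_mul_left,
          ← (hg.mul_left _).tsum_sub ((summable_arcsinCoeff_mul_pow hy 1).mul_left y)]
        exact tsum_congr htel
    _ = g 0 := by
        rw [hg.tsum_sub ((summable_nat_add_iff 1).2 hg), hg.tsum_eq_zero_add]
        ring
    _ = 1 := by simp [g, arcsinCoeff_zero]

lemma hasDerivAt_tsum_arcsinCoeff_mul_pow {y : ℝ} (hy : |y| < 1) :
    HasDerivAt (fun z => ∑' m : ℕ, arcsinCoeff m * z ^ (2 * m + 1))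
      (∑' m : ℕ, arcsinCoeff m * ((2 * m + 1) * y ^ (2 * m))) y := by
  obtain ⟨r, hyr, hr⟩ := exists_between hy
  have hr0 : 0 < r := (abs_nonneg y).trans_lt hyr
  refine hasDerivAt_tsum_of_isPreconnected
    (summable_two_mul_add_one_mul_pow (r := r) (by rwa [abs_of_pos hr0])) isOpen_Ioo
    isPreconnected_Ioo (fun m z _ => ?_) (fun m z hz => norm_arcsinCoeff_mul_le ?_ m)
    (g' := fun m z => arcsinCoeff m * ((2 * m + 1) * z ^ (2 * m))) (y₀ := 0)
    (by simpa using hr0) (summable_arcsinCoeff_mul_pow (by simp) 1) (abs_lt.1 hyr)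
  · simpa using (hasDerivAt_pow (2 * m + 1) z).const_mul (arcsinCoeff m)
  · exact abs_le.2 ⟨hz.1.le, hz.2.le⟩

lemma tsum_arcsinCoeff_mul_pow {y : ℝ} (hy : |y| < 1) :
    ∑' m : ℕ, arcsinCoeff m * y ^ (2 * m + 1) = arcsin y / √(1 - y ^ 2) := by
  set T : ℝ → ℝ := fun z => ∑' m : ℕ, arcsinCoeff m * z ^ (2 * m + 1)
  have hderiv : ∀ z ∈ Ioo (-1 : ℝ) 1,
      HasDerivAt (fun z => √(1 - z ^ 2) * T z - arcsin z) 0 z := by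
    intro z hz
    have hz1 : 0 < 1 - z ^ 2 := by nlinarith [hz.1, hz.2]
    have hd := ((((hasDerivAt_pow 2 z).const_sub 1).sqrt hz1.ne').mul
      (hasDerivAt_tsum_arcsinCoeff_mul_pow (abs_lt.2 hz))).sub
      (Real.hasDerivAt_arcsin (by linarith [hz.1]) (by linarith [hz.2]))
    refine hd.congr_deriv ?_
    have hkey := one_sub_sq_mul_tsum_sub_mul_tsum (abs_lt.2 hz)
    have hsq := Real.sq_sqrt hz1.le
    generalize ∑' m : ℕ, arcsinCoeff m * ((2 * m + 1) * z ^ (2 * m)) = P at hkey ⊢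
    generalize ∑' m : ℕ, arcsinCoeff m * z ^ (2 * m + 1) = Tz at hkey ⊢
    field_simp
    linear_combination 2 * hkey + 2 * P * hsq
  have hconst := isOpen_Ioo.is_const_of_deriv_eq_zero isPreconnected_Ioo
    (fun z hz => (hderiv z hz).differentiableAt.differentiableWithinAt)
    (fun z hz => (hderiv z hz).deriv) (abs_lt.1 hy) (show (0 : ℝ) ∈ Ioo (-1) 1 by norm_num)
  have hsqrt : 0 < √(1 - y ^ 2) := Real.sqrt_pos.2 (by nlinarith [abs_lt.1 hy])
  simp only [T, ne_eq, Nat.add_one_ne_zero, not_false_eq_true, zero_pow, mul_zero, tsum_zero,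
    arcsin_zero, sub_zero] at hconst
  rw [eq_div_iff hsqrt.ne']
  linarith

lemma summable_arcsinCoeff_div_mul_pow {y : ℝ} (hy : |y| < 1) :
    Summable fun m : ℕ => arcsinCoeff m / (m + 1) * y ^ (2 * (m + 1)) := by
  refine (summable_arcsinCoeff_mul_pow (y := |y|) (by rwa [abs_abs]) 2).of_norm_bounded
    fun m => ?_
  rw [norm_mul, norm_div, norm_pow, Real.norm_eq_abs, Real.norm_eq_abs, Real.norm_eq_abs,
    abs_of_pos (arcsinCoeff_pos m), abs_of_pos (by positivity : (0 : ℝ) < m + 1),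
    show 2 * (m + 1) = 2 * m + 2 by ring]
  gcongr
  exact div_le_self (arcsinCoeff_pos m).le (by simp)

lemma arcsin_sq_eq_tsum_of_nonneg {y : ℝ} (hy0 : 0 ≤ y) (hy1 : y < 1) :
    arcsin y ^ 2 = ∑' m : ℕ, arcsinCoeff m / (m + 1) * y ^ (2 * (m + 1)) := by
  have hlt : ∀ u ∈ uIcc 0 y, |u| < 1 := fun u hu => by
    rw [uIcc_of_le hy0] at hu
    exact abs_lt.2 ⟨by linarith [hu.1], hu.2.trans_lt hy1⟩
  have hderiv : ∀ u ∈ uIcc 0 y, HasDerivAt (fun z => arcsin z ^ 2)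
      (2 * ∑' m : ℕ, arcsinCoeff m * u ^ (2 * m + 1)) u := fun u hu => by
    have hu' := abs_lt.1 (hlt u hu)
    refine ((hasDerivAt_arcsin (by linarith) (by linarith)).pow 2).congr_deriv ?_
    rw [tsum_arcsinCoeff_mul_pow (hlt u hu)]
    push_cast
    ring
  have hcont : ContinuousOn (fun u => 2 * ∑' m : ℕ, arcsinCoeff m * u ^ (2 * m + 1)) (uIcc 0 y) :=
    fun u hu => ((hasDerivAt_tsum_arcsinCoeff_mul_pow (hlt u hu)).continuousAt.const_mul
      2).continuousWithinAt
  have hterm : ∀ m : ℕ, ∫ u in (0 : ℝ)..y, 2 * arcsinCoeff m * u ^ (2 * m + 1)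
      = arcsinCoeff m / (m + 1) * y ^ (2 * (m + 1)) := fun m => by
    rw [intervalIntegral.integral_const_mul, integral_pow]
    push_cast
    field_simp
    ring_nf
  rw [← sub_zero (arcsin y ^ 2), ← zero_pow two_ne_zero, ← arcsin_zero,
    ← intervalIntegral.integral_eq_sub_of_hasDerivAt hderiv hcont.intervalIntegrable]
  simp_rw [← tsum_mul_left, ← mul_assoc, ← hterm]
  refine intervalIntegral_tsum_of_nonneg hy0
    (fun m => (by fun_prop : Continuous _).intervalIntegrable _ _) (fun m u hu => ?_) ?_
  · have := arcsinCoeff_pos m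
    have := hu.1.le
    positivity
  · simp_rw [hterm]
    exact summable_arcsinCoeff_div_mul_pow (abs_lt.2 ⟨by linarith, hy1⟩)

lemma arcsin_sq_eq_tsum {y : ℝ} (hy : |y| < 1) :
    arcsin y ^ 2 = ∑' m : ℕ, arcsinCoeff m / (m + 1) * y ^ (2 * (m + 1)) := by
  have h := arcsin_sq_eq_tsum_of_nonneg (abs_nonneg y) hy
  rcases abs_choice y with hy' | hy' <;> rw [hy'] at h
  · exact h
  · simpa only [arcsin_neg, neg_sq, pow_mul] using h

lemma integral_pow_mul_arccos (n : ℕ) :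
    ∫ x in (0 : ℝ)..1, x ^ n * arccos x = (∫ θ in (0 : ℝ)..π / 2, sin θ ^ (n + 1)) / (n + 1) := by
  have hsubst : ∫ x in (0 : ℝ)..1, x ^ n * arccos x
      = ∫ θ in (0 : ℝ)..π / 2, (π / 2 - θ) * (sin θ ^ n * cos θ) := by
    have := intervalIntegral.integral_comp_mul_deriv (a := 0) (b := π / 2)
      (g := fun x => x ^ n * arccos x) (fun θ _ => hasDerivAt_sin θ) continuous_cos.continuousOn
      (by fun_prop)
    rw [sin_zero, sin_pi_div_two] at this
    rw [← this]
    refine intervalIntegral.integral_congr fun θ hθ => ?_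
    rw [uIcc_of_le (by positivity)] at hθ
    simp only [Function.comp_apply, arccos_eq_pi_div_two_sub_arcsin,
      arcsin_sin (by linarith [hθ.1, pi_pos]) hθ.2]
    ring
  have hv : ∀ θ : ℝ, HasDerivAt (fun θ => sin θ ^ (n + 1) / (n + 1)) (sin θ ^ n * cos θ) θ :=
    fun θ => (((hasDerivAt_sin θ).pow (n + 1)).div_const _).congr_deriv (by
      push_cast
      field_simp)
  rw [hsubst, intervalIntegral.integral_mul_deriv_eq_deriv_mul
    (fun θ _ => (hasDerivAt_id' θ).const_sub (π / 2)) (fun θ _ => hv θ)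
    (continuous_const.intervalIntegrable _ _)
    ((by fun_prop : Continuous fun θ => sin θ ^ n * cos θ).intervalIntegrable _ _)]
  simp [intervalIntegral.integral_div]

lemma arcsinCoeff_mul_integral_sin_pow (m : ℕ) :
    arcsinCoeff m * ∫ θ in (0 : ℝ)..π / 2, sin θ ^ (2 * m + 2) = π / (4 * (m + 1)) := by
  induction m with
  | zero =>
    simp only [arcsinCoeff_zero, one_mul, integral_sin_sq, sin_zero, cos_zero, sin_pi_div_two,
      cos_pi_div_two, mul_zero, sub_zero, zero_add, CharP.cast_eq_zero]
    ring
  | succ m ih =>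
    rw [show 2 * (m + 1) + 2 = (2 * m + 2) + 2 by ring, integral_sin_pow, arcsinCoeff_succ]
    simp only [sin_zero, cos_pi_div_two, ne_eq, Nat.add_one_ne_zero, not_false_eq_true, zero_pow,
      zero_mul, mul_zero, sub_zero, zero_div, zero_add]
    push_cast
    generalize ∫ θ in (0 : ℝ)..π / 2, sin θ ^ (2 * m + 2) = I at ih ⊢
    field_simp at ih ⊢
    linear_combination (2 * (m : ℝ) + 3) * ih

lemma arcsinCoeff_mul_integral_pow_mul_arccos (m : ℕ) :
    arcsinCoeff m * ∫ x in (0 : ℝ)..1, x ^ (2 * m + 1) * arccos x = π / (8 * (m + 1) ^ 2) := by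
  rw [integral_pow_mul_arccos, mul_div_assoc', show 2 * m + 1 + 1 = 2 * m + 2 by ring,
    arcsinCoeff_mul_integral_sin_pow]
  push_cast
  field_simp
  ring

lemma summable_pow_div_nat_add_one_pow_three {t : ℝ} (ht0 : 0 ≤ t) (ht1 : t ≤ 1) :
    Summable fun n : ℕ => t ^ (2 * (n + 1)) / (n + 1 : ℝ) ^ 3 := by
  have h := (summable_nat_add_iff 1).2 (Real.summable_one_div_nat_pow.2 (by norm_num : 1 < 3))
  refine h.of_nonneg_of_le (fun n => by positivity) fun n => ?_
  push_cast
  gcongr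
  exact pow_le_one₀ ht0 ht1

lemma arcsin_mul_sq_mul_arccos_div_eq_tsum {t x : ℝ} (ht0 : 0 ≤ t) (ht1 : t ≤ 1)
    (hx : x ∈ Icc (0 : ℝ) 1) :
    arcsin (t * x) ^ 2 * arccos x / x
      = ∑' m : ℕ, arcsinCoeff m / (m + 1) * t ^ (2 * (m + 1)) * (x ^ (2 * m + 1) * arccos x) := by
  rcases hx.2.eq_or_lt with rfl | hx1
  · simp
  rcases hx.1.eq_or_lt with rfl | hx0
  · simp
  have htx : |t * x| < 1 := by
    rw [abs_of_nonneg (by positivity)]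
    nlinarith
  rw [arcsin_sq_eq_tsum htx, ← tsum_mul_right, ← tsum_div_const]
  refine tsum_congr fun m => ?_
  rw [mul_pow]
  field_simp
  ring

open Real in
theorem cubes_sum_eq_integral (t : ℝ) (ht0 : 0 ≤ t) (ht1 : t ≤ 1) :
    (π / 8) * ∑' n : ℕ, t ^ (2 * (n + 1)) / (n + 1 : ℝ) ^ 3 =
      ∫ x in (0:ℝ)..1, (arcsin (t * x)) ^ 2 * arccos x / x := by
  set a : ℕ → ℝ := fun m => arcsinCoeff m / (m + 1) * t ^ (2 * (m + 1))
  have hterm : ∀ m : ℕ, ∫ x in (0 : ℝ)..1, a m * (x ^ (2 * m + 1) * arccos x)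
      = π / 8 * (t ^ (2 * (m + 1)) / (m + 1 : ℝ) ^ 3) := fun m => by
    rw [intervalIntegral.integral_const_mul]
    calc _ = t ^ (2 * (m + 1)) / (m + 1)
          * (arcsinCoeff m * ∫ x in (0 : ℝ)..1, x ^ (2 * m + 1) * arccos x) := by ring
      _ = _ := by
        rw [arcsinCoeff_mul_integral_pow_mul_arccos]
        field_simp
  have hnonneg : ∀ m : ℕ, ∀ x ∈ Ioc (0 : ℝ) 1, 0 ≤ a m * (x ^ (2 * m + 1) * arccos x) :=
    fun m x hx => mul_nonneg (by have := arcsinCoeff_pos m; positivity)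
      (mul_nonneg (pow_nonneg hx.1.le _) (arccos_nonneg x))
  have hsum : Summable fun m => ∫ x in (0 : ℝ)..1, a m * (x ^ (2 * m + 1) * arccos x) := by
    simp_rw [hterm]
    exact (summable_pow_div_nat_add_one_pow_three ht0 ht1).mul_left _
  rw [intervalIntegral.integral_congr fun x hx =>
      arcsin_mul_sq_mul_arccos_div_eq_tsum ht0 ht1 (by rwa [uIcc_of_le zero_le_one] at hx),
    intervalIntegral_tsum_of_nonneg zero_le_one
      (fun m => (by fun_prop : Continuous _).intervalIntegrable _ _) hnonneg hsum,
    ← tsum_mul_left]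
  exact tsum_congr fun m => (hterm m).symm
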